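/- Let B₀ symmetric positive definite, P symmetric positive semidefinite with λₙ(P)=0, β ∈ [0,1), B = (1-β)B₀ + βP, K symmetric positive semidefinite, and S = B⁻¹ + K. Then κ(S) ≤ κ(B₀)(1 + βλ₁(P)/((1-β)λ₁(B₀))) + ((1-β)λ₁(B₀) + βλ₁(P))λ₁(K). -/

import Mathlib

open Matrix

noncomputable def lam1 {ι : Type*} [Fintype ι] [DecidableEq ι] (A : Matrix ι ι ℝ) : ℝ :=
  sSup (spectrum ℝ A)

noncomputable def lamn {ι : Type*} [Fintype ι] [DecidableEq ι] (A : Matrix ι ι ℝ) : ℝ :=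
  sInf (spectrum ℝ A)

noncomputable def condNum {ι : Type*} [Fintype ι] [DecidableEq ι] (A : Matrix ι ι ℝ) : ℝ :=
  lam1 A / lamn A

section Aux
set_option linter.unusedSectionVars false
variable {ι : Type*} [Fintype ι] [DecidableEq ι]

lemma herm_smul {A : Matrix ι ι ℝ} (hA : A.IsHermitian) (c : ℝ) : (c • A).IsHermitian := by
  rw [Matrix.IsHermitian, conjTranspose_smul, star_trivial, hA.eq]

lemma psd_smul {A : Matrix ι ι ℝ} (hA : A.PosSemidef) {c : ℝ} (hc : 0 ≤ c) :
    (c • A).PosSemidef := by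
  refine .of_dotProduct_mulVec_nonneg (herm_smul hA.1 c) fun x => ?_
  rw [smul_mulVec, dotProduct_smul]
  exact mul_nonneg hc (hA.dotProduct_mulVec_nonneg x)

lemma det_reflect {A : Matrix ι ι ℝ} (hA : A.IsHermitian) (μ : ℝ) :
    (algebraMap ℝ (Matrix ι ι ℝ) μ - A).det = ∏ i, (μ - hA.eigenvalues i) := by
  have hUU : (hA.eigenvectorUnitary : Matrix ι ι ℝ) * star (hA.eigenvectorUnitary : Matrix ι ι ℝ) = 1 :=
    mem_unitaryGroup_iff.mp hA.eigenvectorUnitary.2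
  have key : algebraMap ℝ (Matrix ι ι ℝ) μ - A =
      (hA.eigenvectorUnitary : Matrix ι ι ℝ) * diagonal (fun i => μ - hA.eigenvalues i)
        * star (hA.eigenvectorUnitary : Matrix ι ι ℝ) := by
    have h1 : diagonal (fun i => μ - hA.eigenvalues i)
        = diagonal (fun _ => μ) - diagonal (RCLike.ofReal ∘ hA.eigenvalues) := by
      rw [← diagonal_sub]
      congr 1
    have h2 : (hA.eigenvectorUnitary : Matrix ι ι ℝ) * diagonal (fun _ : ι => μ)
        * star (hA.eigenvectorUnitary : Matrix ι ι ℝ) = algebraMap ℝ (Matrix ι ι ℝ) μ := by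
      rw [← Matrix.smul_one_eq_diagonal, mul_smul_comm, smul_mul_assoc, mul_one, hUU,
        Algebra.algebraMap_eq_smul_one]
    rw [h1, Matrix.mul_sub, Matrix.sub_mul, h2, ← Unitary.conjStarAlgAut_apply (S := ℝ), ← hA.spectral_theorem]
  rw [key, det_mul_right_comm, hUU, one_mul, det_diagonal]

lemma spec_eq {A : Matrix ι ι ℝ} (hA : A.IsHermitian) :
    spectrum ℝ A = Set.range hA.eigenvalues := by
  ext μ
  constructor
  · intro hμ
    rw [spectrum.mem_iff, Matrix.isUnit_iff_isUnit_det, isUnit_iff_ne_zero, not_not,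
      det_reflect hA, Finset.prod_eq_zero_iff] at hμ
    obtain ⟨i, _, hi⟩ := hμ
    exact ⟨i, by linarith [sub_eq_zero.mp hi]⟩
  · rintro ⟨i, rfl⟩
    exact hA.eigenvalues_mem_spectrum_real i

variable [Nonempty ι]

lemma spec_nonempty {A : Matrix ι ι ℝ} (hA : A.IsHermitian) : (spectrum ℝ A).Nonempty := by
  rw [spec_eq hA]; exact Set.range_nonempty _

lemma spec_finite {A : Matrix ι ι ℝ} (hA : A.IsHermitian) : (spectrum ℝ A).Finite := by
  rw [spec_eq hA]; exact Set.finite_range _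

lemma lam1_mem {A : Matrix ι ι ℝ} (hA : A.IsHermitian) : lam1 A ∈ spectrum ℝ A :=
  Set.Nonempty.csSup_mem (spec_nonempty hA) (spec_finite hA)

lemma lamn_mem {A : Matrix ι ι ℝ} (hA : A.IsHermitian) : lamn A ∈ spectrum ℝ A :=
  Set.Nonempty.csInf_mem (spec_nonempty hA) (spec_finite hA)

lemma le_lam1 {A : Matrix ι ι ℝ} (hA : A.IsHermitian) {μ : ℝ} (h : μ ∈ spectrum ℝ A) :
    μ ≤ lam1 A :=
  le_csSup (spec_finite hA).bddAbove h

lemma lamn_le {A : Matrix ι ι ℝ} (hA : A.IsHermitian) {μ : ℝ} (h : μ ∈ spectrum ℝ A) :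
    lamn A ≤ μ :=
  csInf_le (spec_finite hA).bddBelow h

lemma psd_iff {A : Matrix ι ι ℝ} (hA : A.IsHermitian) :
    A.PosSemidef ↔ ∀ μ ∈ spectrum ℝ A, 0 ≤ μ := by
  constructor
  · intro h μ hμ
    rw [spec_eq hA] at hμ
    obtain ⟨i, rfl⟩ := hμ
    exact h.eigenvalues_nonneg i
  · intro h
    exact hA.posSemidef_iff_eigenvalues_nonneg.mpr fun i => h _ (hA.eigenvalues_mem_spectrum_real i)

lemma reflect_mem (A : Matrix ι ι ℝ) (c μ : ℝ) :
    μ ∈ spectrum ℝ (c • (1 : Matrix ι ι ℝ) - A) ↔ c - μ ∈ spectrum ℝ A := by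
  rw [spectrum.mem_iff, spectrum.mem_iff, Algebra.algebraMap_eq_smul_one,
    Algebra.algebraMap_eq_smul_one]
  have h : μ • (1 : Matrix ι ι ℝ) - (c • 1 - A) = -((c - μ) • 1 - A) := by module
  rw [h, IsUnit.neg_iff]

lemma shift_mem (A : Matrix ι ι ℝ) (c μ : ℝ) :
    μ ∈ spectrum ℝ (A - c • (1 : Matrix ι ι ℝ)) ↔ μ + c ∈ spectrum ℝ A := by
  rw [spectrum.mem_iff, spectrum.mem_iff, Algebra.algebraMap_eq_smul_one,
    Algebra.algebraMap_eq_smul_one]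
  have h' : μ • (1 : Matrix ι ι ℝ) - (A - c • 1) = (μ + c) • 1 - A := by module
  rw [h']

lemma lam1_le_iff {A : Matrix ι ι ℝ} (hA : A.IsHermitian) (c : ℝ) :
    lam1 A ≤ c ↔ (c • (1 : Matrix ι ι ℝ) - A).PosSemidef := by
  have hherm : (c • (1 : Matrix ι ι ℝ) - A).IsHermitian :=
    (herm_smul Matrix.isHermitian_one c).sub hA
  rw [psd_iff hherm]
  constructor
  · intro h μ hμ
    have := lamn_le hA ((reflect_mem A c μ).mp hμ)  -- c - μ ∈ σ A so lamn ≤ c - μ... not what we need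
    have h2 := le_lam1 hA ((reflect_mem A c μ).mp hμ)
    linarith
  · intro h
    have hm : c - lam1 A ∈ spectrum ℝ (c • (1 : Matrix ι ι ℝ) - A) := by
      rw [reflect_mem]
      simpa using lam1_mem hA
    linarith [h _ hm]

lemma le_lamn_iff {A : Matrix ι ι ℝ} (hA : A.IsHermitian) (c : ℝ) :
    c ≤ lamn A ↔ (A - c • (1 : Matrix ι ι ℝ)).PosSemidef := by
  have hherm : (A - c • (1 : Matrix ι ι ℝ)).IsHermitian :=
    hA.sub (herm_smul Matrix.isHermitian_one c)
  rw [psd_iff hherm]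
  constructor
  · intro h μ hμ
    have h2 := lamn_le hA ((shift_mem A c μ).mp hμ)
    linarith
  · intro h
    have hm : lamn A - c ∈ spectrum ℝ (A - c • (1 : Matrix ι ι ℝ)) := by
      rw [shift_mem]
      simpa using lamn_mem hA
    linarith [h _ hm]

lemma spec_inv {B : Matrix ι ι ℝ} (hB : B.PosDef) :
    spectrum ℝ B⁻¹ = (spectrum ℝ B)⁻¹ := by
  have hu : IsUnit B := B.isUnit_iff_isUnit_det.mpr (isUnit_iff_ne_zero.mpr hB.det_pos.ne')
  have h1 : B⁻¹ = ↑hu.unit⁻¹ := by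
    have h2 := Ring.inverse_unit hu.unit
    rw [hu.unit_spec] at h2
    rw [Matrix.nonsing_inv_eq_ringInverse, h2]
  rw [h1, ← spectrum.map_inv, hu.unit_spec]

lemma spec_pos {B : Matrix ι ι ℝ} (hB : B.PosDef) {μ : ℝ} (h : μ ∈ spectrum ℝ B) : 0 < μ := by
  rw [spec_eq hB.1] at h
  obtain ⟨i, rfl⟩ := h
  exact hB.eigenvalues_pos i

lemma lamn_pos {B : Matrix ι ι ℝ} (hB : B.PosDef) : 0 < lamn B :=
  spec_pos hB (lamn_mem hB.1)

lemma lam1_inv {B : Matrix ι ι ℝ} (hB : B.PosDef) : lam1 B⁻¹ = (lamn B)⁻¹ := by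
  have hBn := lamn_pos hB
  apply le_antisymm
  · apply csSup_le (spec_nonempty hB.inv.1)
    intro μ hμ
    rw [spec_inv hB, Set.mem_inv] at hμ
    have h1 : 0 < μ⁻¹ := spec_pos hB hμ
    have h2 : lamn B ≤ μ⁻¹ := lamn_le hB.1 hμ
    have h3 := one_div_le_one_div_of_le hBn h2
    rw [one_div, one_div, inv_inv] at h3
    exact h3
  · apply le_lam1 hB.inv.1
    rw [spec_inv hB, Set.mem_inv, inv_inv]
    exact lamn_mem hB.1

lemma lamn_inv {B : Matrix ι ι ℝ} (hB : B.PosDef) : lamn B⁻¹ = (lam1 B)⁻¹ := by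
  have hB1 : 0 < lam1 B := spec_pos hB (lam1_mem hB.1)
  apply le_antisymm
  · apply csInf_le (spec_finite hB.inv.1).bddBelow
    rw [spec_inv hB, Set.mem_inv, inv_inv]
    exact lam1_mem hB.1
  · apply le_csInf (spec_nonempty hB.inv.1)
    intro μ hμ
    rw [spec_inv hB, Set.mem_inv] at hμ
    have h1 : 0 < μ⁻¹ := spec_pos hB hμ
    have h2 : μ⁻¹ ≤ lam1 B := le_lam1 hB.1 hμ
    have h3 := one_div_le_one_div_of_le h1 h2
    rw [one_div, one_div, inv_inv] at h3
    exact h3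

lemma pd_smul {A : Matrix ι ι ℝ} (hA : A.PosDef) {c : ℝ} (hc : 0 < c) :
    (c • A).PosDef := by
  refine .of_dotProduct_mulVec_pos (herm_smul hA.1 c) fun x hx => ?_
  rw [smul_mulVec, dotProduct_smul]
  exact mul_pos hc (hA.dotProduct_mulVec_pos hx)

end Aux


theorem stmt_6 {n : ℕ} (hn : 0 < n) (B₀ P K : Matrix (Fin n) (Fin n) ℝ)
    (hB₀ : B₀.PosDef) (hP : P.PosSemidef) (hPsing : lamn P = 0)
    (hK : K.PosSemidef) (β : ℝ) (hβ0 : 0 ≤ β) (hβ1 : β < 1) :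
    condNum (((1 - β) • B₀ + β • P)⁻¹ + K)
      ≤ condNum B₀ * (1 + β * lam1 P / ((1 - β) * lam1 B₀)) +
          ((1 - β) * lam1 B₀ + β * lam1 P) * lam1 K := by
  haveI : Nonempty (Fin n) := Fin.pos_iff_nonempty.mp hn
  have h1β : (0:ℝ) < 1 - β := by linarith
  set B : Matrix (Fin n) (Fin n) ℝ := (1 - β) • B₀ + β • P with hBdef
  have hBpos : B.PosDef := (pd_smul hB₀ h1β).add_posSemidef (psd_smul hP hβ0)
  set a := lam1 B₀
  set b := lamn B₀
  set p := lam1 P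
  set k := lam1 K
  have hb : 0 < b := lamn_pos hB₀
  have hba : b ≤ a := le_lam1 hB₀.1 (lamn_mem hB₀.1)
  have ha : 0 < a := hb.trans_le hba
  have hp : 0 ≤ p := (psd_iff hP.1).mp hP _ (lam1_mem hP.1)
  have hk : 0 ≤ k := (psd_iff hK.1).mp hK _ (lam1_mem hK.1)
  -- bound lam1 B
  have hB₀top : (a • (1 : Matrix (Fin n) (Fin n) ℝ) - B₀).PosSemidef :=
    (lam1_le_iff hB₀.1 a).mp le_rfl
  have hPtop : (p • (1 : Matrix (Fin n) (Fin n) ℝ) - P).PosSemidef :=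
    (lam1_le_iff hP.1 p).mp le_rfl
  have hB₀bot : (B₀ - b • (1 : Matrix (Fin n) (Fin n) ℝ)).PosSemidef :=
    (le_lamn_iff hB₀.1 b).mp le_rfl
  have hb1 : lam1 B ≤ (1 - β) * a + β * p := by
    rw [lam1_le_iff hBpos.1]
    have heq : ((1 - β) * a + β * p) • (1 : Matrix (Fin n) (Fin n) ℝ) - B
        = (1 - β) • (a • (1 : Matrix (Fin n) (Fin n) ℝ) - B₀)
          + β • (p • (1 : Matrix (Fin n) (Fin n) ℝ) - P) := by
      rw [hBdef]; module
    rw [heq]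
    exact (psd_smul hB₀top h1β.le).add (psd_smul hPtop hβ0)
  have hbn : (1 - β) * b ≤ lamn B := by
    rw [le_lamn_iff hBpos.1]
    have heq : B - ((1 - β) * b) • (1 : Matrix (Fin n) (Fin n) ℝ)
        = (1 - β) • (B₀ - b • (1 : Matrix (Fin n) (Fin n) ℝ)) + β • P := by
      rw [hBdef]; module
    rw [heq]
    exact (psd_smul hB₀bot h1β.le).add (psd_smul hP hβ0)
  have hbnpos : 0 < lamn B := lamn_pos hBpos
  have hb1pos : 0 < lam1 B := lamn_pos hBpos |>.trans_le (le_lam1 hBpos.1 (lamn_mem hBpos.1))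
  -- S = B⁻¹ + K
  have hBinv : (B⁻¹).PosDef := hBpos.inv
  have hSpd : (B⁻¹ + K).PosDef := hBinv.add_posSemidef hK
  have hs1 : lam1 (B⁻¹ + K) ≤ (lamn B)⁻¹ + k := by
    rw [lam1_le_iff hSpd.1]
    have hBi : (lam1 B⁻¹ • (1 : Matrix (Fin n) (Fin n) ℝ) - B⁻¹).PosSemidef :=
      (lam1_le_iff hBinv.1 _).mp le_rfl
    have hKt : (k • (1 : Matrix (Fin n) (Fin n) ℝ) - K).PosSemidef :=
      (lam1_le_iff hK.1 k).mp le_rfl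
    have heq : ((lamn B)⁻¹ + k) • (1 : Matrix (Fin n) (Fin n) ℝ) - (B⁻¹ + K)
        = (lam1 B⁻¹ • (1 : Matrix (Fin n) (Fin n) ℝ) - B⁻¹)
          + (k • (1 : Matrix (Fin n) (Fin n) ℝ) - K) := by
      rw [lam1_inv hBpos]; module
    rw [heq]
    exact hBi.add hKt
  have hsn : (lam1 B)⁻¹ ≤ lamn (B⁻¹ + K) := by
    rw [le_lamn_iff hSpd.1]
    have hBi : (B⁻¹ - lamn B⁻¹ • (1 : Matrix (Fin n) (Fin n) ℝ)).PosSemidef :=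
      (le_lamn_iff hBinv.1 _).mp le_rfl
    have heq : (B⁻¹ + K) - (lam1 B)⁻¹ • (1 : Matrix (Fin n) (Fin n) ℝ)
        = (B⁻¹ - lamn B⁻¹ • (1 : Matrix (Fin n) (Fin n) ℝ)) + K := by
      rw [lamn_inv hBpos]; module
    rw [heq]
    exact hBi.add hK
  have hsnpos : 0 < lamn (B⁻¹ + K) := lamn_pos hSpd
  have hs1pos : 0 < lam1 (B⁻¹ + K) :=
    hsnpos.trans_le (le_lam1 hSpd.1 (lamn_mem hSpd.1))
  -- assemble
  have step1 : condNum (B⁻¹ + K) ≤ lam1 (B⁻¹ + K) * lam1 B := by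
    rw [condNum, div_eq_mul_inv]
    apply mul_le_mul_of_nonneg_left ?_ hs1pos.le
    rw [← inv_inv (lam1 B)]
    exact inv_anti₀ (by positivity) hsn
  have step2 : lam1 (B⁻¹ + K) * lam1 B ≤ ((lamn B)⁻¹ + k) * ((1 - β) * a + β * p) := by
    apply mul_le_mul hs1 hb1 hb1pos.le
    positivity
  have step3 : ((lamn B)⁻¹ + k) * ((1 - β) * a + β * p)
      ≤ (((1 - β) * b)⁻¹ + k) * ((1 - β) * a + β * p) := by
    apply mul_le_mul_of_nonneg_right _ (by positivity)
    have : (lamn B)⁻¹ ≤ ((1 - β) * b)⁻¹ := inv_anti₀ (by positivity) hbn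
    linarith
  have final : (((1 - β) * b)⁻¹ + k) * ((1 - β) * a + β * p)
      = condNum B₀ * (1 + β * p / ((1 - β) * a)) + ((1 - β) * a + β * p) * k := by
    rw [condNum]
    rw [show lam1 B₀ = a from rfl, show lamn B₀ = b from rfl]
    field_simp
  calc condNum (B⁻¹ + K) ≤ lam1 (B⁻¹ + K) * lam1 B := step1
    _ ≤ ((lamn B)⁻¹ + k) * ((1 - β) * a + β * p) := step2
    _ ≤ (((1 - β) * b)⁻¹ + k) * ((1 - β) * a + β * p) := step3
    _ = _ := final
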